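/- Let {A_t : t ∈ T} be a proper tree of sets indexed by a tree T. Then the subspace {A_t : t ∈ T} ∪ {∅} of the Cantor cube P(A_0) = 2^{A_0} is homeomorphic to the one-point compactification A(T), with ∅ corresponding to ∞. -/

import Mathlib

/-!
Send `t` to (the characteristic function of) `A t` and `∞` to `∅`; properness makes this
injective. For `x ∈ A ⊥` the members of the tree containing `x` are exactly the `A t` with
`t ≤ m` for some `m`, so each coordinate of the map is the indicator of the image of `Iic m`
in `A(T)`. In the interval topology `Iic m` is open, closed and compact, hence that image is
clopen and the map is continuous. A continuous bijection from the compact space `A(T)` onto a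
subspace of the Hausdorff Cantor cube is a homeomorphism.
-/

open Filter Topology Set

universe u v

/-- A tree in the sense of the paper: a partial order with a minimal element `⊥`,
binary greatest lower bounds, and each set of predecessors `[0,t)` well ordered
(a linearly ordered, well-founded chain). -/
class TreeOrder (T : Type u) extends SemilatticeInf T, OrderBot T where
  chain_lt : ∀ t : T, IsChain (· ≤ ·) {x : T | x < t}
  isWF_lt : ∀ t : T, Set.IsWF {x : T | x < t}

/-- The interval topology, generated by the intervals `(s,t]` (together with the
initial intervals `[0,t]`, which make the root an interior point of `[0,t]`). -/
def intervalTopology (T : Type u) [Preorder T] : TopologicalSpace T :=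
  TopologicalSpace.generateFrom
    ({S : Set T | ∃ a b : T, S = Set.Ioc a b} ∪ {S : Set T | ∃ b : T, S = Set.Iic b})

instance TreeOrder.toTopologicalSpace (T : Type u) [TreeOrder T] : TopologicalSpace T :=
  intervalTopology T

/-- A tree of sets indexed by a tree `T`. -/
structure IsTreeOfSets {T : Type u} [PartialOrder T] {X : Type v} (A : T → Set X) : Prop where
  subset_of_le : ∀ s t : T, t ≤ s → A s ⊆ A t
  disjoint_of_incomp : ∀ s t : T, ¬ s ≤ t → ¬ t ≤ s → A s ∩ A t = ∅
  iInter_chain : ∀ C : Set T, C.Nonempty → IsChain (· ≤ ·) C → ∀ t : T, IsLUB C t →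
    ⋂ s ∈ C, A s = A t
  iInter_unbounded : ∀ C : Set T, C.Nonempty → IsChain (· ≤ ·) C → ¬ BddAbove C →
    ⋂ s ∈ C, A s = ∅

/-- A proper tree of sets: all members are nonempty and pairwise distinct. -/
def IsProperTreeOfSets {T : Type u} [PartialOrder T] {X : Type v} (A : T → Set X) : Prop :=
  IsTreeOfSets A ∧ (∀ t : T, (A t).Nonempty) ∧ Function.Injective A

/-- The characteristic function of `C`, as a point of the Cantor cube `2^B`. -/
noncomputable def subChar {X : Type v} (B C : Set X) : ↥B → Bool :=
  fun x => @decide ((x : X) ∈ C) (Classical.propDecidable _)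

namespace TreeOrder

variable {T : Type u} [TreeOrder T]

lemma isChain_Iic (m : T) : IsChain (· ≤ ·) (Iic m) := by
  intro s hs t ht hne
  rcases (hs : s ≤ m).eq_or_lt with rfl | hs
  · exact Or.inr ht
  rcases (ht : t ≤ m).eq_or_lt with rfl | ht
  · exact Or.inl hs.le
  exact chain_lt m hs ht hne

instance : WellFoundedLT T := by
  refine ⟨⟨fun t => ⟨t, fun y hyt => ?_⟩⟩⟩
  induction y using (Set.wellFoundedOn_iff.mp (isWF_lt t)).induction with
  | _ y IH => exact ⟨y, fun z hzy => IH z ⟨hzy, hzy.trans hyt, hyt⟩ (hzy.trans hyt)⟩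

lemma exists_isLUB {C : Set T} (hC : BddAbove C) : ∃ m, IsLUB C m := by
  obtain ⟨m, hm, hmin⟩ := wellFounded_lt.has_min (upperBounds C) hC
  refine ⟨m, hm, fun v hv => ?_⟩
  have hvm : v ⊓ m ∈ upperBounds C := fun c hc => le_inf (hv hc) (hm hc)
  exact inf_eq_right.mp (eq_of_le_of_not_lt inf_le_right (hmin _ hvm))

lemma Iic_subset_Ioc_union_Iic {a m : T} (ha : a ≤ m) : Iic m ⊆ Ioc a m ∪ Iic a := by
  intro t ht
  rcases (isChain_Iic m).total ht ha with hta | hat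
  · exact Or.inr hta
  rcases hat.lt_or_eq with hat | rfl
  · exact Or.inl ⟨hat, ht⟩
  · exact Or.inr le_rfl

lemma isOpen_Iic (b : T) : IsOpen (Iic b) :=
  .basic _ (.inr ⟨b, rfl⟩)

lemma isOpen_Ioc (a b : T) : IsOpen (Ioc a b) :=
  .basic _ (.inl ⟨a, b, rfl⟩)

lemma isClosed_Iic (m : T) : IsClosed (Iic m) := by
  refine isOpen_compl_iff.mp <| isOpen_iff_forall_mem_open.mpr fun s hs =>
    ⟨Ioc (s ⊓ m) s, ?_, isOpen_Ioc _ _, ?_, le_rfl⟩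
  · rintro t ⟨hst, hts⟩ htm
    exact hst.not_ge (le_inf hts htm)
  · exact inf_le_left.lt_of_ne fun h => hs (h ▸ inf_le_right)

/-- By the Alexander subbase theorem it suffices to cover `Iic m` by subbasic sets; the one
containing `m` leaves uncovered at most some `Iic a` with `a < m`. -/
lemma isCompact_Iic (m : T) : IsCompact (Iic m) := by
  induction m using WellFoundedLT.induction with
  | _ m IH =>
  refine isCompact_generateFrom rfl fun P hPS hcov => ?_
  obtain ⟨U, hUP, hmU⟩ := hcov (le_refl m)
  rcases hPS hUP with ⟨a, b, rfl⟩ | ⟨b, rfl⟩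
  · obtain ⟨Q, hQP, hQfin, hQcov⟩ := (IH a hmU.1).elim_finite_subcover_image
      (fun V hV => TopologicalSpace.GenerateOpen.basic V (hPS hV))
      (((Iic_subset_Iic.mpr hmU.1.le).trans hcov).trans sUnion_eq_biUnion.subset)
    rw [← sUnion_eq_biUnion] at hQcov
    refine ⟨insert (Ioc a b) Q, insert_subset hUP hQP, hQfin.insert _, ?_⟩
    refine (Iic_subset_Ioc_union_Iic hmU.1.le).trans (union_subset ?_ ?_)
    · exact (Ioc_subset_Ioc_right hmU.2).trans (subset_sUnion_of_mem (mem_insert _ _))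
    · exact hQcov.trans (sUnion_mono (subset_insert _ _))
  · exact ⟨{Iic b}, singleton_subset_iff.mpr hUP, finite_singleton _,
      (Iic_subset_Iic.mpr hmU).trans (by simp)⟩

lemma isClopen_image_coe_Iic (m : T) : IsClopen (((↑) : T → OnePoint T) '' Iic m) :=
  ⟨OnePoint.isClosed_image_coe.mpr ⟨isClosed_Iic m, isCompact_Iic m⟩,
    OnePoint.isOpen_image_coe.mpr (isOpen_Iic m)⟩

end TreeOrder

/-- The members of a tree of sets containing a given point form a chain (by disjointness of
incomparable members) which is bounded (since unbounded chains have empty intersection);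
its supremum is the largest such member. -/
lemma IsTreeOfSets.exists_forall_mem_iff_le {T : Type u} [TreeOrder T] {X : Type v}
    {A : T → Set X} (hA : IsTreeOfSets A) {x : X} (hx : x ∈ A ⊥) :
    ∃ m : T, ∀ t : T, x ∈ A t ↔ t ≤ m := by
  set C : Set T := {t | x ∈ A t}
  have hCne : C.Nonempty := ⟨⊥, hx⟩
  have hxC : x ∈ ⋂ s ∈ C, A s := mem_iInter₂.mpr fun _ hs => hs
  have hchain : IsChain (· ≤ ·) C := by
    intro s hs t ht _
    by_contra! hst
    exact eq_empty_iff_forall_notMem.mp (hA.disjoint_of_incomp s t hst.1 hst.2) x ⟨hs, ht⟩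
  have hbdd : BddAbove C := by
    by_contra hC
    simp [hA.iInter_unbounded C hCne hchain hC] at hxC
  obtain ⟨m, hm⟩ := TreeOrder.exists_isLUB hbdd
  have hxm : x ∈ A m := hA.iInter_chain C hCne hchain m hm ▸ hxC
  exact ⟨m, fun t => ⟨fun ht => hm.1 ht, fun htm => hA.subset_of_le m t htm hxm⟩⟩

section subChar

variable {X : Type v}

@[simp]
lemma subChar_eq_true {B C : Set X} (x : B) : subChar B C x = true ↔ (x : X) ∈ C := by
  simp [subChar]

lemma subChar_empty (B : Set X) : subChar B ∅ = fun _ => false := by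
  ext x
  simp [subChar]

lemma subChar_injOn (B : Set X) : InjOn (subChar B) (𝒫 B) := by
  intro C hC D hD h
  ext y
  by_cases hyB : y ∈ B
  · have hy := congrFun h ⟨y, hyB⟩
    rwa [Bool.eq_iff_iff, subChar_eq_true, subChar_eq_true] at hy
  · exact iff_of_false (fun hy => hyB (hC hy)) (fun hy => hyB (hD hy))

end subChar

section charOnePoint

variable {T : Type u} [TreeOrder T] {X : Type v}

noncomputable def charOnePoint (A : T → Set X) (o : OnePoint T) : ↥(A ⊥) → Bool :=
  subChar (A ⊥) (o.elim ∅ A)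

lemma range_charOnePoint (A : T → Set X) :
    range (charOnePoint A) = (range fun t : T => subChar (A ⊥) (A t)) ∪ {fun _ => false} := by
  rw [← subChar_empty, union_singleton, ← image_univ, ← OnePoint.insert_infty_range_coe,
    image_insert_eq, ← range_comp]
  rfl

lemma injective_charOnePoint {A : T → Set X} (hA : IsProperTreeOfSets A) :
    Function.Injective (charOnePoint A) := by
  obtain ⟨hT, hne, hinj⟩ := hA
  have hsub : ∀ o : OnePoint T, o.elim ∅ A ∈ 𝒫 (A ⊥) := by
    rintro (_ | t)
    · exact empty_subset _
    · exact hT.subset_of_le t ⊥ bot_le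
  refine fun o o' h => ?_
  have h := subChar_injOn (A ⊥) (hsub o) (hsub o') h
  cases o <;> cases o'
  · rfl
  · exact absurd h.symm (hne _).ne_empty
  · exact absurd h (hne _).ne_empty
  · exact congrArg _ (hinj h)

lemma continuous_charOnePoint {A : T → Set X} (hA : IsTreeOfSets A) :
    Continuous (charOnePoint A) := by
  refine continuous_pi fun x => ?_
  obtain ⟨m, hm⟩ := hA.exists_forall_mem_iff_le x.2
  have hx : (fun o => charOnePoint A o x) = (((↑) : T → OnePoint T) '' Iic m).boolIndicator := by
    ext o
    rw [Bool.eq_iff_iff, ← mem_iff_boolIndicator]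
    cases o <;> simp [charOnePoint, hm]
  rw [hx, continuous_boolIndicator_iff_isClopen]
  exact TreeOrder.isClopen_image_coe_Iic m

end charOnePoint

/-- For a proper tree of sets `{A_t : t ∈ T}`, the subspace `{A_t : t ∈ T} ∪ {∅}` of the
Cantor cube `2^{A_⊥}` is homeomorphic to the one-point compactification `A(T)`, with `∅`
corresponding to `∞`. -/
theorem homeomorph_onePoint_of_properTreeOfSets {T : Type u} [TreeOrder T] {X : Type v}
    (A : T → Set X) (hA : IsProperTreeOfSets A) :
    ∃ h : OnePoint T ≃ₜ
        ↥((Set.range fun t : T => subChar (A ⊥) (A t)) ∪ {fun _ => false}),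
      (h OnePoint.infty).1 = fun _ => false := by
  let e : OnePoint T ≃ₜ range (charOnePoint A) :=
    ((continuous_charOnePoint hA.1).subtype_mk _).homeoOfEquivCompactToT2
      (f := Equiv.ofInjective _ (injective_charOnePoint hA))
  exact ⟨e.trans (Homeomorph.setCongr (range_charOnePoint A)), subChar_empty _⟩
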